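/- Let W be a word and X a factor of W of length n. Suppose there is another factor X' of W with |X'| = |X| such that P̂ (the backtrack of P) is a prefix of X' and Ŝ (the backtrack of S) is a suffix of X', where P is a prefix of X, S is a suffix of X, and P ≠ S (as occurrences). Then X has a period of length 2|X| − (|P| + |S|), i.e., X[i] = X[i + 2|X| − (|P|+|S|)] for all valid indices i. -/

import Mathlib

inductive Letter | u | d | l | r
deriving DecidableEq, Repr

def Letter.comp : Letter → Letter
  | .u => .d
  | .d => .u
  | .l => .r
  | .r => .l

/-- The backtrack of a word: the letterwise complement of the reverse. -/
def backtrack (W : List Letter) : List Letter := W.reverse.map Letter.comp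

/-!
Write `n = |X|`, `p = |P|`, `s = |S|`. Reading `X'` from the left, its first `p` letters are the
complemented letters of `P`, i.e. of `X`, in reverse order: `X'[q] = comp X[p-1-q]`. Reading it
from the right, its last `s` letters come in the same way from `S`: `X'[q] = comp X[2n-s-1-q]`.
On the overlap `n - s ≤ q < p` both descriptions apply, and since `comp` is injective,
`X[p-1-q] = X[p-1-q + (2n-p-s)]`.
-/

namespace List

variable {α β : Type*} {f : α → β}

theorem getElem?_of_reverse_map_isPrefix {P X : List α} {Y : List β} (hP : P <+: X)
    (hY : P.reverse.map f <+: Y) {q : ℕ} (hq : q < P.length) :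
    Y[q]? = X[P.length - 1 - q]?.map f := by
  obtain ⟨t, rfl⟩ := hP
  obtain ⟨u, rfl⟩ := hY
  rw [getElem?_append_left (by simpa), getElem?_map, getElem?_reverse hq,
    getElem?_append_left (by omega)]

theorem getElem?_of_reverse_map_isSuffix {S X : List α} {Y : List β} (hS : S <:+ X)
    (hY : S.reverse.map f <:+ Y) (hlen : Y.length = X.length) {q : ℕ}
    (hq₁ : X.length - S.length ≤ q) (hq₂ : q < X.length) :
    Y[q]? = X[2 * X.length - S.length - 1 - q]?.map f := by
  obtain ⟨t, rfl⟩ := hS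
  obtain ⟨v, rfl⟩ := hY
  simp only [length_append, length_map, length_reverse] at hlen hq₁ hq₂ ⊢
  rw [getElem?_append_right (by omega), getElem?_map, getElem?_reverse (by omega),
    getElem?_append_right (by omega)]
  congr 2
  omega

theorem hasPeriod_of_reverse_map_isPrefix_isSuffix (hf : Function.Injective f)
    {X P S : List α} {Y : List β} (hlen : Y.length = X.length) (hP : P <+: X) (hS : S <:+ X)
    (hPY : P.reverse.map f <+: Y) (hSY : S.reverse.map f <:+ Y) :
    X.HasPeriod (2 * X.length - (P.length + S.length)) := by
  refine hasPeriod_iff_getElem?.2 fun k hk => ?_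
  have hp := hP.length_le
  have hs := hS.length_le
  have hleft := getElem?_of_reverse_map_isPrefix hP hPY (q := P.length - 1 - k) (by omega)
  have hright := getElem?_of_reverse_map_isSuffix hS hSY hlen (q := P.length - 1 - k)
    (by omega) (by omega)
  have key := Option.map_injective hf (hleft.symm.trans hright)
  rwa [show P.length - 1 - (P.length - 1 - k) = k by omega,
    show 2 * X.length - S.length - 1 - (P.length - 1 - k)
      = k + (2 * X.length - (P.length + S.length)) by omega] at key

end List

theorem Letter.comp_injective : Function.Injective Letter.comp := by
  intro a b h
  cases a <;> cases b <;> simp_all [Letter.comp]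

theorem presuf_period_general (X X' P S : List Letter)
    (hlen : X'.length = X.length)
    (hP : P <+: X) (hS : S <:+ X)
    (hPX' : backtrack P <+: X') (hSX' : backtrack S <:+ X') :
    ∀ i, 1 ≤ i → i + (2 * X.length - (P.length + S.length)) ≤ X.length →
      X[i - 1]? = X[i - 1 + (2 * X.length - (P.length + S.length))]? := by
  intro i hi hle
  exact List.hasPeriod_iff_getElem?.1
    (List.hasPeriod_of_reverse_map_isPrefix_isSuffix Letter.comp_injective hlen hP hS hPX' hSX')
    (i - 1) (by omega)

theorem presuf_period (W X X' P S : List Letter)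
    (hX : X <:+: W) (hX' : X' <:+: W) (hlen : X'.length = X.length)
    (hP : P <+: X) (hS : S <:+ X)
    (hPX' : backtrack P <+: X') (hSX' : backtrack S <:+ X')
    (hPS : ¬ (P = X ∧ S = X)) :
    ∀ i, 1 ≤ i → i + (2 * X.length - (P.length + S.length)) ≤ X.length →
      X[i - 1]? = X[i - 1 + (2 * X.length - (P.length + S.length))]? :=
  presuf_period_general X X' P S hlen hP hS hPX' hSX'
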